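/- arXiv:0711.4459 — 5 statements merged into one kernel-verified Lean document; each statement's English description precedes it below -/
import Mathlib

section
/- Let H be a finite group, let g ∈ H be an involution, and let N be a normal subgroup of H of odd order. Then |H : C_H(g)| = |N : C_N(g)| · |H/N : C_{H/N}(gN)|. -/
/-!
If `h` centralizes `g` modulo `N`, then `g` and `t = h⁻¹ g h` are involutions with `g t ∈ N`, so
`g t` has odd order; inside the dihedral group `⟨g, t⟩` they are then conjugate by an element of
`⟨g t⟩ ≤ N`, which puts `h` in `N C_H(g)`. Hence the preimage of `C_{H/N}(gN)` in `H` is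
`N C_H(g)`, and `|N C_H(g) : C_H(g)| = |N : C_N(g)|` since `N` is normal.
-/

open Subgroup

section

variable {G : Type*} [Group G]

theorem Subgroup.relIndex_normal_sup (H N : Subgroup G) [N.Normal] :
    H.relIndex (N ⊔ H) = H.relIndex N := by
  refine (Nat.card_congr (Equiv.ofBijective (quotientSubgroupOfEmbeddingOfLE H le_sup_left)
    ⟨(quotientSubgroupOfEmbeddingOfLE H le_sup_left).injective, ?_⟩)).symm
  rintro ⟨⟨x, hx⟩⟩
  obtain ⟨n, hn, h, hh, rfl⟩ := mem_sup_of_normal_left.mp hx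
  refine ⟨QuotientGroup.mk ⟨n, hn⟩, QuotientGroup.eq.mpr ?_⟩
  simpa [mem_subgroupOf] using hh

theorem exists_mem_zpowers_conj_eq_of_odd_orderOf_mul {g t : G} (hg : g ^ 2 = 1) (ht : t ^ 2 = 1)
    (hodd : Odd (orderOf (g * t))) : ∃ n ∈ zpowers (g * t), n⁻¹ * g * n = t := by
  obtain ⟨k, hk⟩ := hodd
  set u := g * t
  have hgg : g * g = 1 := by rw [← sq, hg]
  have ht' : t⁻¹ = t := by rw [inv_eq_iff_mul_eq_one, ← sq, ht]
  have hgu : g * u * g⁻¹ = u⁻¹ := by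
    calc g * u * g⁻¹ = (g * g) * t * g⁻¹ := by simp only [u, mul_assoc]
      _ = u⁻¹ := by rw [hgg, one_mul, mul_inv_rev, ht']
  -- `n` is the square root of `u` in the cyclic group `⟨u⟩` of odd order `2k + 1`
  set n := u ^ (k + 1)
  have hnn : n * n = u := by
    rw [← pow_add, show k + 1 + (k + 1) = orderOf u + 1 by omega, pow_succ, pow_orderOf_eq_one,
      one_mul]
  have hgn : g * n * g⁻¹ = n⁻¹ := by rw [← conj_pow, hgu, inv_pow]
  refine ⟨n, pow_mem (mem_zpowers u) _, ?_⟩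
  calc n⁻¹ * g * n = n⁻¹ * (g * n * g⁻¹) * g := by group
    _ = (n * n)⁻¹ * g := by rw [hgn]; group
    _ = t := by rw [hnn, mul_inv_rev, ht', inv_mul_cancel_right]

theorem sup_centralizer_le_comap_mk'_centralizer (g : G) (N : Subgroup G) [N.Normal] :
    N ⊔ centralizer {g} ≤ (centralizer {(g : G ⧸ N)}).comap (QuotientGroup.mk' N) := by
  refine sup_le ((QuotientGroup.ker_mk' N).symm.le.trans (ker_le_comap _ _)) ?_
  refine map_le_iff_le_comap.mp ?_
  simpa using map_centralizer_le_centralizer_image {g} (QuotientGroup.mk' N)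

theorem comap_mk'_centralizer_eq_sup {g : G} (hg : g ^ 2 = 1)
    {N : Subgroup G} [N.Normal] (hN : Odd (Nat.card N)) :
    (centralizer {(g : G ⧸ N)}).comap (QuotientGroup.mk' N) = N ⊔ centralizer {g} := by
  refine le_antisymm (fun h hh => ?_) (sup_centralizer_le_comap_mk'_centralizer g N)
  rw [mem_comap, mem_centralizer_singleton_iff, QuotientGroup.mk'_apply] at hh
  have ht : (h⁻¹ * g * h) ^ 2 = 1 := by
    simpa [hg] using conj_pow (i := 2) (a := h⁻¹) (b := g)
  have hgt : g * (h⁻¹ * g * h) ∈ N := by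
    rw [← QuotientGroup.eq_one_iff, QuotientGroup.mk_mul, QuotientGroup.mk_mul,
      QuotientGroup.mk_mul, mul_assoc _ (g : G ⧸ N), ← hh, QuotientGroup.mk_inv,
      inv_mul_cancel_left, ← QuotientGroup.mk_mul, ← sq, hg, QuotientGroup.mk_one]
  obtain ⟨n, hn, hnt⟩ := exists_mem_zpowers_conj_eq_of_odd_orderOf_mul hg ht
    (hN.of_dvd_nat (N.orderOf_dvd_natCard hgt))
  have hnN : n ∈ N := zpowers_le.mpr hgt hn
  have hc : h * n⁻¹ ∈ centralizer {g} := by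
    rw [mem_centralizer_singleton_iff]
    calc h * n⁻¹ * g = h * (n⁻¹ * g * n) * n⁻¹ := by group
      _ = g * (h * n⁻¹) := by rw [hnt]; group
  simpa using mul_mem (mem_sup_right hc) (mem_sup_left hnN)

end

theorem index_centralizer_eq_of_odd_normal_general {H : Type*} [Group H]
    (g : H) (hg2 : g ^ 2 = 1)
    (N : Subgroup H) [N.Normal] (hN : Odd (Nat.card N)) :
    (Subgroup.centralizer {g}).index =
      (Subgroup.centralizer {g}).relIndex N *
        (Subgroup.centralizer {(g : H ⧸ N)}).index := by
  rw [← index_comap_of_surjective _ (QuotientGroup.mk'_surjective N),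
    comap_mk'_centralizer_eq_sup hg2 hN, ← relIndex_normal_sup, relIndex_mul_index le_sup_right]

/-- Let `H` be a finite group, `g ∈ H` an involution, and `N ⊴ H` of odd
order. Then `|H : C_H(g)| = |N : C_N(g)| · |H/N : C_{H/N}(gN)|`. -/
theorem index_centralizer_eq_of_odd_normal {H : Type*} [Group H] [Finite H]
    (g : H) (hg1 : g ≠ 1) (hg2 : g ^ 2 = 1)
    (N : Subgroup H) [N.Normal] (hN : Odd (Nat.card N)) :
    (Subgroup.centralizer {g}).index =
      (Subgroup.centralizer {g}).relIndex N *
        (Subgroup.centralizer {(g : H ⧸ N)}).index :=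
  index_centralizer_eq_of_odd_normal_general g hg2 N hN
end

section
/- Let H be a finite group, let N be a normal subgroup of H, let g be an involution contained in N, and let P be a Sylow 2-subgroup of N. Then |H : C_H(g)| · |g^N ∩ P| = |N : C_N(g)| · |g^H ∩ P|, where g^H (respectively g^N) denotes the set of H-conjugates (respectively N-conjugates) of g. -/
/-!
Count `T = {h ∈ H | h g h⁻¹ ∈ P}` in two ways. Orbit–stabilizer gives
`|T| = |C_H(g)| · |g^H ∩ P|` and `|T ∩ N| = |C_N(g)| · |g^N ∩ P|`. Since `T` is stable under left
multiplication by `N_H(P)`, and `N_H(P) N = H` by the Frattini argument, every coset of `N` meets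
`T` in as many elements as `N` does, so `|T| = |H : N| · |T ∩ N|`. Eliminating the orders of the
groups gives the identity.
-/

namespace MulAction

variable {G X : Type*} [Group G] [MulAction G X]

def smulEqEquivStabilizer {b x : X} {g₀ : G} (hg₀ : g₀ • b = x) :
    {g : G // g • b = x} ≃ stabilizer G b :=
  (Equiv.mulLeft g₀⁻¹).subtypeEquiv fun g => by
    rw [mem_stabilizer_iff, Equiv.coe_mulLeft, mul_smul, inv_smul_eq_iff, hg₀]

theorem card_smul_mem_eq_card_orbit_inter_mul (b : X) (s : Set X) :
    Nat.card {g : G // g • b ∈ s} = Nat.card ↥(orbit G b ∩ s) * Nat.card (stabilizer G b) := by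
  have fibres := Equiv.sigmaSubtypeFiberEquivSubtype (fun g : G => g • b)
    (p := fun g => g • b ∈ s) (q := (· ∈ orbit G b ∩ s))
    fun g => ⟨fun h => ⟨mem_orbit b g, h⟩, And.right⟩
  rw [← Nat.card_congr fibres, ← Nat.card_prod]
  exact Nat.card_congr <| (Equiv.sigmaCongrRight fun x : ↥(orbit G b ∩ s) =>
    smulEqEquivStabilizer (mem_orbit_iff.mp x.2.1).choose_spec).trans (Equiv.sigmaEquivProd _ _)

end MulAction

namespace Subgroup

variable {G : Type*} [Group G]

theorem card_conj_mem_eq_card_conjugates_inter_mul (K : Subgroup G) (a : G) (s : Set G) :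
    Nat.card ↥({h | h * a * h⁻¹ ∈ s} ∩ K) =
      Nat.card {x | (∃ k ∈ K, k * a * k⁻¹ = x) ∧ x ∈ s} * Nat.card ↥(centralizer {a} ⊓ K) := by
  let _ : MulAction K G := MulAction.compHom G (ConjAct.toConjAct.toMonoidHom.comp K.subtype)
  have smul_def (k : K) (x : G) : k • x = k * x * (k : G)⁻¹ := ConjAct.toConjAct_smul _ _
  have orbit_inter : MulAction.orbit K a ∩ s = {x | (∃ k ∈ K, k * a * k⁻¹ = x) ∧ x ∈ s} := by
    ext x
    simp [MulAction.mem_orbit_iff, smul_def]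
  have e_conj : {k : K // k • a ∈ s} ≃ ↥({h | h * a * h⁻¹ ∈ s} ∩ K) :=
    (Equiv.subtypeSubtypeEquivSubtypeInter (· ∈ K) (fun h => h * a * h⁻¹ ∈ s)).trans
      (Equiv.subtypeEquivRight fun _ => and_comm)
  have e_stab : MulAction.stabilizer K a ≃ ↥(centralizer {a} ⊓ K) :=
    (Equiv.subtypeEquivRight fun k : K => by
      rw [MulAction.mem_stabilizer_iff, smul_def, mul_inv_eq_iff_eq_mul,
        mem_centralizer_singleton_iff, eq_comm]).trans <|
    (Equiv.subtypeSubtypeEquivSubtypeInter (· ∈ K) (· ∈ centralizer {a})).trans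
      (Equiv.subtypeEquivRight fun _ => and_comm)
  rw [← Nat.card_congr e_conj, ← orbit_inter, ← Nat.card_congr e_stab]
  exact MulAction.card_smul_mem_eq_card_orbit_inter_mul a s

open Pointwise in
theorem card_eq_index_mul_card_inter {L N : Subgroup G} [N.Normal] (hLN : L ⊔ N = ⊤) {T : Set G}
    (hT : ∀ l ∈ L, ∀ t ∈ T, l * t ∈ T) : Nat.card T = N.index * Nat.card ↥(T ∩ N) := by
  have fibre (q : G ⧸ N) : Nonempty ({t : T // (t : G ⧸ N) = q} ≃ ↥(T ∩ N)) := by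
    obtain ⟨u, rfl⟩ := QuotientGroup.mk_surjective q
    obtain ⟨l, hl, m, hm, rfl⟩ : u ∈ (L : Set G) * N := by
      rw [← mul_normal, hLN]; trivial
    refine ⟨(Equiv.subtypeSubtypeEquivSubtypeInter (· ∈ T)
      (fun t => (t : G ⧸ N) = (l * m : G))).trans <|
      (Equiv.mulLeft l⁻¹).subtypeEquiv fun t => ?_⟩
    rw [QuotientGroup.mk_mul_of_mem l hm, eq_comm, QuotientGroup.eq, Equiv.coe_mulLeft,
      Set.mem_inter_iff, SetLike.mem_coe]
    exact ⟨fun ⟨htT, htN⟩ => ⟨hT _ (inv_mem hl) _ htT, htN⟩,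
      fun ⟨htT, htN⟩ => ⟨by simpa using hT _ hl _ htT, htN⟩⟩
  rw [index, ← Nat.card_prod]
  exact Nat.card_congr <| (Equiv.sigmaFiberEquiv _).symm.trans <|
    (Equiv.sigmaCongrRight fun q => (fibre q).some).trans (Equiv.sigmaEquivProd _ _)

theorem card_inf_mul_relIndex (H K : Subgroup G) :
    Nat.card ↥(H ⊓ K) * H.relIndex K = Nat.card K := by
  rw [← relIndex_bot_left, ← relIndex_bot_left, relIndex_inf_mul_relIndex, bot_inf_eq]

end Subgroup

theorem Sylow.card_conj_mem_eq_index_mul {G : Type*} [Group G] {p : ℕ} [Fact p.Prime]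
    {N : Subgroup G} [N.Normal] [Finite (Sylow p N)] (P : Sylow p N) (g : G) :
    Nat.card {h | h * g * h⁻¹ ∈ (P : Subgroup N).map N.subtype} =
      N.index * Nat.card ↥({h | h * g * h⁻¹ ∈ (P : Subgroup N).map N.subtype} ∩ N) :=
  Subgroup.card_eq_index_mul_card_inter P.normalizer_sup_eq_top fun l hl t ht => by
    rw [Set.mem_ofPred_eq, show l * t * g * (l * t)⁻¹ = l * (t * g * t⁻¹) * l⁻¹ by group,
      ← Subgroup.mem_normalizer_iff.mp hl]
    exact ht

theorem index_centralizer_mul_card_conjugates_inter_sylow_general {H : Type*} [Group H] [Finite H]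
    (N : Subgroup H) [N.Normal] (g : H) (P : Sylow 2 N) :
    (Subgroup.centralizer {g}).index *
        Nat.card {x : H | (∃ n ∈ N, n * g * n⁻¹ = x) ∧ x ∈ (P : Subgroup N).map N.subtype} =
      (Subgroup.centralizer {g}).relIndex N *
        Nat.card {x : H | (∃ h : H, h * g * h⁻¹ = x) ∧ x ∈ (P : Subgroup N).map N.subtype} := by
  have count_H := Subgroup.card_conj_mem_eq_card_conjugates_inter_mul ⊤ g
    ((P : Subgroup N).map N.subtype)
  simp only [Subgroup.coe_top, Set.inter_univ, Subgroup.mem_top, true_and, inf_top_eq,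
    SetLike.mem_coe] at count_H
  have count_N := Subgroup.card_conj_mem_eq_card_conjugates_inter_mul N g
    ((P : Subgroup N).map N.subtype)
  simp only [SetLike.mem_coe] at count_N
  have frattini := Sylow.card_conj_mem_eq_index_mul P g
  set S := (P : Subgroup N).map N.subtype
  set C := Subgroup.centralizer {g}
  set T := {h : H | h * g * h⁻¹ ∈ S}
  refine Nat.eq_of_mul_eq_mul_right (Nat.mul_pos (Nat.card_pos (α := C))
    (Nat.card_pos (α := ↥(C ⊓ N)))) ?_
  calc _ = C.index * Nat.card C *
        (Nat.card {x | (∃ n ∈ N, n * g * n⁻¹ = x) ∧ x ∈ S} * Nat.card ↥(C ⊓ N)) := by ring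
    _ = N.index * Nat.card N * Nat.card ↥(T ∩ N) := by
      rw [C.index_mul_card, ← count_N, N.index_mul_card]
    _ = Nat.card T * (Nat.card ↥(C ⊓ N) * C.relIndex N) := by
      rw [frattini, C.card_inf_mul_relIndex N]; ring
    _ = _ := by rw [count_H]; ring

/-- Let `H` be a finite group, `N ⊴ H`, `g ∈ N` an involution, and `P` a
Sylow `2`-subgroup of `N`.  Then `|H : C_H(g)| · |g^N ∩ P| = |N : C_N(g)| · |g^H ∩ P|`. -/
theorem index_centralizer_mul_card_conjugates_inter_sylow {H : Type*} [Group H] [Finite H]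
    (N : Subgroup H) [N.Normal] (g : H) (hgN : g ∈ N) (hg1 : g ≠ 1) (hg2 : g ^ 2 = 1)
    (P : Sylow 2 N) :
    (Subgroup.centralizer {g}).index *
        Nat.card {x : H | (∃ n ∈ N, n * g * n⁻¹ = x) ∧ x ∈ (P : Subgroup N).map N.subtype} =
      (Subgroup.centralizer {g}).relIndex N *
        Nat.card {x : H | (∃ h : H, h * g * h⁻¹ = x) ∧ x ∈ (P : Subgroup N).map N.subtype} :=
  index_centralizer_mul_card_conjugates_inter_sylow_general N g P
end

section
/- Let p be a prime with p ≥ 7 and p ≡ 1 (mod 3), let q = p^a, and let F be a finite field with |F| = q. Suppose q ≡ 3 (mod 4), q > 7, n > 2 and (q, n) ≠ (31, 4). Then every 2-subgroup P of GL_n(F) satisfies |P| < q^{n-1} + q^{n-2} + ⋯ + q + 1. -/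
/-! A 2-subgroup of `GL_n(F_q)` lies in a Sylow 2-subgroup, whose order is the 2-part of
`∏_{i=1}^n (q^i - 1)`. Since `q ≡ 3 (mod 4)`, lifting the exponent gives `v₂(q^i - 1) = 1` for
odd `i` and `v₂(q^i - 1) = v₂(q + 1) + v₂(i)` for even `i`; with `m = ⌊n/2⌋`, `t = 2^{v₂(q+1)}`
and Legendre's bound `v₂(m!) < m`, the 2-part is at most `2^{n+m-1} t^m`. Now `t ∣ q + 1` and
`q ≡ 7 (mod 12)`, so `q ≥ 19`, and then `2^{n+m-1} t^m ≤ q^{n-1}`; the only failure is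
`t = q + 1 = 32`, `n = 4`. -/

open Finset
open scoped Nat

theorem IsPGroup.card_le_pow_factorization {G : Type*} [Group G] [Finite G] {p : ℕ}
    [Fact p.Prime] {P : Subgroup G} (hP : IsPGroup p P) :
    Nat.card P ≤ p ^ (Nat.card G).factorization p := by
  obtain ⟨Q, hPQ⟩ := hP.exists_le_sylow
  exact (Subgroup.card_le_of_le hPQ).trans_eq Q.card_eq_multiplicity

theorem Matrix.factorization_card_GL {p : ℕ} [Fact p.Prime] {F : Type*} [Field F] [Fintype F]
    (n : ℕ) (hp : ¬p ∣ Fintype.card F) :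
    (Nat.card (GL (Fin n) F)).factorization p =
      ∑ i ∈ range n, padicValNat p (Fintype.card F ^ (i + 1) - 1) := by
  set q := Fintype.card F
  have hq : 1 < q := Fintype.one_lt_card
  have hsplit : ∀ i < n, q ^ n - q ^ i = q ^ i * (q ^ (n - i) - 1) := fun i hi => by
    rw [Nat.mul_sub, mul_one, ← pow_add, Nat.add_sub_cancel' hi.le]
  have hpos : ∀ e ≠ 0, q ^ e - 1 ≠ 0 := fun e he =>
    Nat.sub_ne_zero_of_lt (Nat.one_lt_pow he hq)
  rw [Matrix.card_GL_field, Fin.prod_univ_eq_prod_range (fun i => q ^ n - q ^ i),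
    Nat.factorization_prod fun i hi => ?_, Finsupp.finsetSum_apply, ← sum_range_reflect]
  · refine sum_congr rfl fun i hi => ?_
    have hi : i < n := mem_range.1 hi
    rw [hsplit _ (by omega), Nat.factorization_mul (by positivity) (hpos _ (by omega)),
      Finsupp.add_apply, Nat.factorization_pow, Finsupp.smul_apply,
      Nat.factorization_eq_zero_of_not_dvd hp, smul_zero, zero_add,
      Nat.factorization_def _ Fact.out,
      show n - (n - 1 - i) = i + 1 by omega]
  · rw [hsplit _ (mem_range.1 hi)]
    exact mul_ne_zero (by positivity) (hpos _ (by have := mem_range.1 hi; omega))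

theorem padicValNat_two_eq_one_of_mod_four_eq_two {x : ℕ} (hx : x % 4 = 2) :
    padicValNat 2 x = 1 := by
  rw [show x = 2 * (x / 2) by omega, padicValNat.mul two_ne_zero (by omega),
    padicValNat.self one_lt_two, padicValNat.eq_zero_of_not_dvd (by omega)]

theorem padicValNat_two_pow_sub_one_of_odd {q e : ℕ} (hq : q % 4 = 3) (he : Odd e) :
    padicValNat 2 (q ^ e - 1) = 1 := by
  apply padicValNat_two_eq_one_of_mod_four_eq_two
  obtain ⟨k, rfl⟩ := he
  have h3 : q ^ (2 * k + 1) % 4 = 3 := by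
    rw [Nat.pow_mod, hq, pow_succ, pow_mul]
    norm_num [Nat.mul_mod, Nat.pow_mod]
  have : 1 ≤ q ^ (2 * k + 1) := Nat.one_le_pow _ _ (by omega)
  omega

theorem padicValNat_two_pow_sub_one_of_even {q e : ℕ} (hq : q % 4 = 3) (he : Even e)
    (he0 : e ≠ 0) : padicValNat 2 (q ^ e - 1) = padicValNat 2 (q + 1) + padicValNat 2 e := by
  have h := padicValNat.pow_two_sub_one (by omega : 1 < q) (by omega) he0 he
  rw [padicValNat_two_eq_one_of_mod_four_eq_two (by omega : (q - 1) % 4 = 2)] at h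
  omega

theorem sum_range_two_mul_padicValNat_two_pow_sub_one {q : ℕ} (hq : q % 4 = 3) (m : ℕ) :
    ∑ i ∈ range (2 * m), padicValNat 2 (q ^ (i + 1) - 1) =
      2 * m + m * padicValNat 2 (q + 1) + padicValNat 2 m ! := by
  induction m with
  | zero => simp
  | succ m ih =>
    rw [mul_add_one, sum_range_succ, sum_range_succ, ih,
      padicValNat_two_pow_sub_one_of_odd hq (odd_two_mul_add_one m),
      show 2 * m + 1 + 1 = 2 * (m + 1) by ring,
      padicValNat_two_pow_sub_one_of_even hq (even_two_mul _) (by omega),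
      padicValNat.mul two_ne_zero m.succ_ne_zero, padicValNat.self one_lt_two, Nat.factorial_succ,
      padicValNat.mul m.succ_ne_zero m.factorial_ne_zero]
    ring

theorem two_mul_two_pow_sum_range_two_mul_le {q m : ℕ} (hq : q % 4 = 3) (hm : m ≠ 0) :
    2 * 2 ^ ∑ i ∈ range (2 * m), padicValNat 2 (q ^ (i + 1) - 1) ≤
      (8 * 2 ^ padicValNat 2 (q + 1)) ^ m := by
  have hfac := padicValNat_factorial_lt_of_ne_zero (p := 2) hm
  rw [sum_range_two_mul_padicValNat_two_pow_sub_one hq, mul_pow, ← pow_mul',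
    show (8 : ℕ) ^ m = 2 ^ (3 * m) by rw [pow_mul]; norm_num, ← pow_add, ← pow_succ']
  exact Nat.pow_le_pow_right two_pos (by omega)

theorem pow_le_two_mul_pow_of_le {A q k m : ℕ} (hA : A ≤ q ^ 2) (hk : 1 ≤ k) (hkm : k ≤ m)
    (hbase : A ^ k ≤ 2 * q ^ (2 * k - 1)) : A ^ m ≤ 2 * q ^ (2 * m - 1) := by
  induction m, hkm using Nat.le_induction with
  | base => exact hbase
  | succ m hkm ih =>
    calc A ^ (m + 1) = A ^ m * A := pow_succ A m
      _ ≤ 2 * q ^ (2 * m - 1) * q ^ 2 := Nat.mul_le_mul ih hA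
      _ = 2 * q ^ (2 * (m + 1) - 1) := by
        rw [mul_assoc, ← pow_add]
        congr 2
        omega

theorem eight_mul_le_sq {q t : ℕ} (hq : 9 ≤ q) (ht : t ∣ q + 1) : 8 * t ≤ q ^ 2 := by
  have := Nat.le_of_dvd (by omega) ht
  nlinarith

theorem sixty_three_le_of_succ_eq_two_pow {q τ : ℕ} (hq : 19 ≤ q) (hq31 : q ≠ 31)
    (hτ : q + 1 = 2 ^ τ) : 63 ≤ q := by
  rcases Nat.lt_or_ge τ 6 with h | h
  · interval_cases τ <;> omega
  · have := Nat.pow_le_pow_right two_pos h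
    omega

theorem sq_eight_mul_two_pow_le {q τ : ℕ} (hq : 19 ≤ q) (hq31 : q ≠ 31)
    (hτ : 2 ^ τ ∣ q + 1) :
    (8 * 2 ^ τ) ^ 2 ≤ 2 * q ^ 3 := by
  obtain ⟨c, hc⟩ := hτ
  have hc0 : c ≠ 0 := by rintro rfl; simp at hc
  rcases (by omega : c = 1 ∨ 2 ≤ c) with rfl | hc2
  · rw [mul_one] at hc
    have := sixty_three_le_of_succ_eq_two_pow hq hq31 hc
    rw [← hc]
    nlinarith
  · have : 2 * 2 ^ τ ≤ q + 1 := by rw [hc, mul_comm]; exact Nat.mul_le_mul_left _ hc2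
    calc (8 * 2 ^ τ) ^ 2 ≤ (4 * (q + 1)) ^ 2 := Nat.pow_le_pow_left (by omega) 2
      _ ≤ 2 * q ^ 3 := by nlinarith

theorem eight_mul_two_pow_pow_le {q τ m : ℕ} (hq : 19 ≤ q) (hτ : 2 ^ τ ∣ q + 1)
    (hm : 2 ≤ m) (hqm : ¬(q = 31 ∧ m = 2)) : (8 * 2 ^ τ) ^ m ≤ 2 * q ^ (2 * m - 1) := by
  have hA := eight_mul_le_sq (by omega) hτ
  by_cases hq31 : q = 31
  · subst hq31
    have : 2 ^ τ ≤ 32 := Nat.le_of_dvd (by norm_num) hτ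
    refine pow_le_two_mul_pow_of_le hA (by norm_num) (by omega : 3 ≤ m) ?_
    calc (8 * 2 ^ τ) ^ 3 ≤ (8 * 32) ^ 3 := by gcongr
      _ ≤ 2 * 31 ^ (2 * 3 - 1) := by norm_num
  · exact pow_le_two_mul_pow_of_le hA (by norm_num) hm (sq_eight_mul_two_pow_le hq hq31 hτ)

theorem pow_pred_lt_sum_range_pow {q n : ℕ} (hn : 2 ≤ n) :
    q ^ (n - 1) < ∑ i ∈ range n, q ^ i := by
  obtain ⟨k, rfl⟩ := Nat.exists_eq_add_of_le' hn
  rw [sum_range_succ, sum_range_succ', pow_zero, show k + 2 - 1 = k + 1 by omega]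
  omega

theorem card_two_subgroup_GL_lt_general (p a n q : ℕ) (hp3 : p % 3 = 1)
    (hq : q = p ^ a) (F : Type*) [Field F] [Fintype F] (hF : Fintype.card F = q)
    (hq4 : q % 4 = 3) (hq7 : 7 < q) (hn : 2 < n) (hqn : ¬(q = 31 ∧ n = 4))
    (P : Subgroup (GL (Fin n) F)) (hP : IsPGroup 2 P) :
    Nat.card P < ∑ i ∈ Finset.range n, q ^ i := by
  have hq19 : 19 ≤ q := by
    have : q % 3 = 1 := by simp [hq, Nat.pow_mod, hp3]
    omega
  have hcard : Nat.card P ≤ 2 ^ ∑ i ∈ range n, padicValNat 2 (q ^ (i + 1) - 1) := by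
    rw [← hF, ← Matrix.factorization_card_GL n (by omega)]
    exact hP.card_le_pow_factorization
  have hτ : 2 ^ padicValNat 2 (q + 1) ∣ q + 1 := pow_padicValNat_dvd
  suffices Nat.card P ≤ q ^ (n - 1) from this.trans_lt (pow_pred_lt_sum_range_pow (by omega))
  obtain ⟨m, rfl | rfl⟩ := n.even_or_odd'
  · have h := (two_mul_two_pow_sum_range_two_mul_le (m := m) hq4 (by omega)).trans
      (eight_mul_two_pow_pow_le hq19 hτ (by omega) (by omega))
    omega
  · rw [sum_range_succ, padicValNat_two_pow_sub_one_of_odd hq4 (odd_two_mul_add_one m),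
      pow_succ'] at hcard
    calc Nat.card P ≤ 2 * 2 ^ ∑ i ∈ range (2 * m), padicValNat 2 (q ^ (i + 1) - 1) := hcard
      _ ≤ (8 * 2 ^ padicValNat 2 (q + 1)) ^ m :=
        two_mul_two_pow_sum_range_two_mul_le hq4 (by omega)
      _ ≤ (q ^ 2) ^ m := Nat.pow_le_pow_left (eight_mul_le_sq (by omega) hτ) m
      _ = q ^ (2 * m + 1 - 1) := by rw [← pow_mul, Nat.add_sub_cancel, mul_comm]

/-- Let `q = p^a` with `p` prime, `p ≥ 7`, `p ≡ 1 (mod 3)`, and let `F` be a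
finite field of cardinality `q`.  If `q ≡ 3 (mod 4)`, `q > 7`, `n > 2` and `(q, n) ≠ (31, 4)`,
then every `2`-subgroup `P` of `GL_n(F)` satisfies `|P| < q^{n-1} + ⋯ + q + 1`. -/
theorem card_two_subgroup_GL_lt (p a n q : ℕ) (hp : p.Prime) (hp7 : 7 ≤ p) (hp3 : p % 3 = 1)
    (hq : q = p ^ a) (F : Type*) [Field F] [Fintype F] (hF : Fintype.card F = q)
    (hq4 : q % 4 = 3) (hq7 : 7 < q) (hn : 2 < n) (hqn : ¬(q = 31 ∧ n = 4))
    (P : Subgroup (GL (Fin n) F)) (hP : IsPGroup 2 P) :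
    Nat.card P < ∑ i ∈ Finset.range n, q ^ i :=
  card_two_subgroup_GL_lt_general p a n q hp3 hq F hF hq4 hq7 hn hqn P hP
end

section
/- Let p be a prime with p ≥ 7 and p ≡ 1 (mod 3), let q = p^a, and let F be a finite field with |F| = q. Suppose q ≡ 3 (mod 4). Then every 2-subgroup P of GL_2(F) contains at most q + 2 involutions, and at most q + 1 of the involutions in P are non-central in GL_2(F) (i.e. are not scalar matrices). -/
/-!
In odd characteristic an involution `x ≠ ±1` of `GL₂(F)` satisfies `(x - 1)(x + 1) = 0` with both
factors singular, so `det x = -1` and `x` fixes a nonzero vector. If two elements `x, y` of a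
`2`-group have equal determinants and fix the same nonzero vector `v`, then `z = x y⁻¹` has
determinant `1` and fixes `v`, hence has trace `2`; by Cayley–Hamilton `(z - 1)² = 0`, so
`1 = z ^ 2 ^ k = 1 + 2 ^ k (z - 1)` forces `x = y`. Thus sending a non-central involution of `P`
to its fixed line is injective into the `q + 1` points of the projective line, and the only
central involution is `-1`.
-/

open Matrix
open scoped LinearAlgebra.Projectivization

theorem one_add_pow_of_mul_self_eq_zero {R : Type*} [Semiring R] {N : R} (hN : N * N = 0)
    (n : ℕ) : (1 + N) ^ n = 1 + n * N := by
  induction n with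
  | zero => simp
  | succ n ih =>
    rw [pow_succ, ih, add_mul, one_mul, mul_add, mul_one, mul_assoc, hN, mul_zero, add_zero,
      Nat.cast_succ, add_one_mul, add_right_comm, add_assoc]

theorem eq_one_of_sub_one_mul_self_eq_zero_of_pow_eq_one {K A : Type*} [Field K] [Ring A]
    [Algebra K A] {z : A} (hz : (z - 1) * (z - 1) = 0) {n : ℕ} (hn : (n : K) ≠ 0)
    (h : z ^ n = 1) : z = 1 := by
  have key := one_add_pow_of_mul_self_eq_zero hz n
  rw [add_sub_cancel, h, left_eq_add, ← nsmul_eq_mul, ← Nat.cast_smul_eq_nsmul K,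
    smul_eq_zero] at key
  exact sub_eq_zero.mp (key.resolve_left hn)

namespace Matrix

section CommRing

variable {R : Type*} [CommRing R]

theorem sq_eq_trace_smul_sub_det_smul_fin_two (M : Matrix (Fin 2) (Fin 2) R) :
    M ^ 2 = M.trace • M - M.det • 1 := by
  ext i j
  fin_cases i <;> fin_cases j <;>
    simp [sq, mul_apply, trace_fin_two, det_fin_two] <;> ring

theorem det_sub_one_fin_two (M : Matrix (Fin 2) (Fin 2) R) :
    (M - 1).det = M.det - M.trace + 1 := by
  simp [det_fin_two, trace_fin_two]
  ring

theorem det_add_one_fin_two (M : Matrix (Fin 2) (Fin 2) R) :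
    (M + 1).det = M.det + M.trace + 1 := by
  simp [det_fin_two, trace_fin_two]
  ring

end CommRing

variable {K : Type*} [Field K]

section Square

variable {n : Type*} [Fintype n] [DecidableEq n]

theorem det_eq_zero_of_mul_eq_zero {A B : Matrix n n K} (h : A * B = 0) (hB : B ≠ 0) :
    A.det = 0 := by
  by_contra hA
  exact hB (((isUnit_iff_isUnit_det A).mpr (isUnit_iff_ne_zero.mpr hA)).mul_right_eq_zero.mp h)

theorem det_sub_one_eq_zero_of_mul_self_eq_one {M : Matrix n n K} (hM : M * M = 1)
    (hneg : M ≠ -1) : (M - 1).det = 0 :=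
  det_eq_zero_of_mul_eq_zero (B := M + 1) (by noncomm_ring [hM])
    fun h ↦ hneg (eq_neg_of_add_eq_zero_left h)

theorem det_add_one_eq_zero_of_mul_self_eq_one {M : Matrix n n K} (hM : M * M = 1)
    (h1 : M ≠ 1) : (M + 1).det = 0 :=
  det_eq_zero_of_mul_eq_zero (B := M - 1) (by noncomm_ring [hM]) (sub_ne_zero.mpr h1)

end Square

theorem det_eq_neg_one_of_mul_self_eq_one (h2 : (2 : K) ≠ 0) {M : Matrix (Fin 2) (Fin 2) K}
    (hM : M * M = 1) (h1 : M ≠ 1) (hneg : M ≠ -1) : M.det = -1 := by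
  have hsub := det_sub_one_eq_zero_of_mul_self_eq_one hM hneg
  have hadd := det_add_one_eq_zero_of_mul_self_eq_one hM h1
  rw [det_sub_one_fin_two] at hsub
  rw [det_add_one_fin_two] at hadd
  have : (2 : K) * (M.det + 1) = 0 := by linear_combination hsub + hadd
  linear_combination (mul_eq_zero.mp this).resolve_left h2

theorem sub_one_mul_self_eq_zero_of_det_eq_one {z : Matrix (Fin 2) (Fin 2) K} (hdet : z.det = 1)
    {v : Fin 2 → K} (hv : v ≠ 0) (hz : z *ᵥ v = v) : (z - 1) * (z - 1) = 0 := by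
  have hsing : (z - 1).det = 0 :=
    exists_mulVec_eq_zero_iff.mp ⟨v, hv, by rw [sub_mulVec, one_mulVec, hz, sub_self]⟩
  have htr : (z - 1).trace = 0 := by
    rw [det_sub_one_fin_two, hdet] at hsing
    rw [trace_sub, trace_one, Fintype.card_fin]
    linear_combination -hsing
  rw [← sq, sq_eq_trace_smul_sub_det_smul_fin_two, htr, hsing, zero_smul, zero_smul, sub_zero]

end Matrix

namespace Matrix.GeneralLinearGroup

section Involution

variable {n : Type*} [Fintype n] [DecidableEq n]

section CommRing

variable {R : Type*} [CommRing R] {x : GL n R}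

theorem neg_one_mem_center : (-1 : GL n R) ∈ Subgroup.center (GL n R) :=
  Subgroup.mem_center_iff.mpr fun g ↦ by rw [mul_neg_one, neg_one_mul]

theorem val_mul_self_eq_one_of_sq_eq_one (hx2 : x ^ 2 = 1) : (x : Matrix n n R) * x = 1 := by
  rw [← Units.val_mul, ← sq, hx2, Units.val_one]

theorem val_ne_one_of_notMem_center (hxc : x ∉ Subgroup.center (GL n R)) :
    (x : Matrix n n R) ≠ 1 := fun h ↦ hxc (Units.val_eq_one.mp h ▸ Subgroup.one_mem _)

theorem val_ne_neg_one_of_notMem_center (hxc : x ∉ Subgroup.center (GL n R)) :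
    (x : Matrix n n R) ≠ -1 := fun h ↦
  hxc ((Units.ext (h.trans (by rw [Units.val_neg, Units.val_one])) : x = -1) ▸ neg_one_mem_center)

end CommRing

variable {F : Type*} [Field F]

theorem eq_neg_one_of_mem_center [Nonempty n] {x : GL n F} (hx : x ∈ Subgroup.center (GL n F))
    (hx2 : x ^ 2 = 1) (hx1 : x ≠ 1) : x = -1 := by
  rw [center_eq_range_scalar] at hx
  obtain ⟨u, rfl⟩ := hx
  have hu : (u : F) ^ 2 = 1 := by
    have i := Classical.arbitrary n
    simpa [sq, coe_scalar] using congrArg (fun g : GL n F ↦ (g : Matrix n n F) i i) hx2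
  rcases sq_eq_one_iff.mp hu with h | h
  · exact absurd (by ext; simp [coe_scalar, h]) hx1
  · ext : 1
    rw [coe_scalar, h, map_neg, map_one, Units.val_neg, Units.val_one]

theorem exists_mulVec_eq_self_of_notMem_center {x : GL n F} (hx2 : x ^ 2 = 1)
    (hxc : x ∉ Subgroup.center (GL n F)) : ∃ v : n → F, v ≠ 0 ∧ (x : Matrix n n F) *ᵥ v = v := by
  obtain ⟨v, hv, hker⟩ := exists_mulVec_eq_zero_iff.mpr <|
    det_sub_one_eq_zero_of_mul_self_eq_one (val_mul_self_eq_one_of_sq_eq_one hx2)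
      (val_ne_neg_one_of_notMem_center hxc)
  exact ⟨v, hv, by rwa [sub_mulVec, one_mulVec, sub_eq_zero] at hker⟩

end Involution

variable {F : Type*} [Field F]

theorem det_eq_neg_one_of_notMem_center (h2 : (2 : F) ≠ 0) {x : GL (Fin 2) F} (hx2 : x ^ 2 = 1)
    (hxc : x ∉ Subgroup.center (GL (Fin 2) F)) : (x : Matrix (Fin 2) (Fin 2) F).det = -1 :=
  det_eq_neg_one_of_mul_self_eq_one h2 (val_mul_self_eq_one_of_sq_eq_one hx2)
    (val_ne_one_of_notMem_center hxc) (val_ne_neg_one_of_notMem_center hxc)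

theorem eq_of_det_eq_of_mulVec_eq_self (h2 : (2 : F) ≠ 0) {P : Subgroup (GL (Fin 2) F)}
    (hP : IsPGroup 2 P) {x y : GL (Fin 2) F} (hx : x ∈ P) (hy : y ∈ P)
    (hdet : (x : Matrix (Fin 2) (Fin 2) F).det = (y : Matrix (Fin 2) (Fin 2) F).det)
    {v : Fin 2 → F} (hv : v ≠ 0) (hxv : (x : Matrix (Fin 2) (Fin 2) F) *ᵥ v = v)
    (hyv : (y : Matrix (Fin 2) (Fin 2) F) *ᵥ v = v) : x = y := by
  obtain ⟨k, hk⟩ := hP ⟨x * y⁻¹, P.mul_mem hx (P.inv_mem hy)⟩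
  have hpow : ((x * y⁻¹ : GL (Fin 2) F) : Matrix (Fin 2) (Fin 2) F) ^ 2 ^ k = 1 := by
    simpa using congrArg (fun g : P ↦ ((g : GL (Fin 2) F) : Matrix (Fin 2) (Fin 2) F)) hk
  have hdet' : ((x * y⁻¹ : GL (Fin 2) F) : Matrix (Fin 2) (Fin 2) F).det = 1 := by
    rw [Units.val_mul, det_mul, hdet, ← det_mul, ← Units.val_mul, mul_inv_cancel, Units.val_one,
      det_one]
  have hyv' : ((y⁻¹ : GL (Fin 2) F) : Matrix (Fin 2) (Fin 2) F) *ᵥ v = v := by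
    conv_lhs => rw [← hyv]
    rw [mulVec_mulVec, ← Units.val_mul, inv_mul_cancel, Units.val_one, one_mulVec]
  have hfix : ((x * y⁻¹ : GL (Fin 2) F) : Matrix (Fin 2) (Fin 2) F) *ᵥ v = v := by
    rw [Units.val_mul, ← mulVec_mulVec, hyv', hxv]
  have hz := eq_one_of_sub_one_mul_self_eq_zero_of_pow_eq_one (K := F)
    (sub_one_mul_self_eq_zero_of_det_eq_one hdet' hv hfix) (by push_cast; exact pow_ne_zero k h2)
    hpow
  exact mul_inv_eq_one.mp (Units.ext hz)

end Matrix.GeneralLinearGroup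

open Matrix.GeneralLinearGroup

theorem card_involutions_le_card_noncentral_add_one {F : Type*} [Field F] [Finite F]
    {n : Type*} [Fintype n] [DecidableEq n] [Nonempty n] (P : Subgroup (GL n F)) :
    Nat.card {x : GL n F | x ∈ P ∧ x ≠ 1 ∧ x ^ 2 = 1} ≤
      Nat.card {x : GL n F | x ∈ P ∧ x ≠ 1 ∧ x ^ 2 = 1 ∧ x ∉ Subgroup.center (GL n F)} + 1 := by
  have hsub : {x : GL n F | x ∈ P ∧ x ≠ 1 ∧ x ^ 2 = 1} ⊆ insert (-1)
      {x : GL n F | x ∈ P ∧ x ≠ 1 ∧ x ^ 2 = 1 ∧ x ∉ Subgroup.center (GL n F)} := by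
    rintro x ⟨hxP, hx1, hx2⟩
    by_cases hc : x ∈ Subgroup.center (GL n F)
    · exact Or.inl (eq_neg_one_of_mem_center hc hx2 hx1)
    · exact Or.inr ⟨hxP, hx1, hx2, hc⟩
  simp only [Nat.card_coe_set_eq]
  exact (Set.ncard_le_ncard hsub (Set.toFinite _)).trans (Set.ncard_insert_le _ _)

theorem card_noncentral_involutions_le {F : Type*} [Field F] [Finite F] (h2 : (2 : F) ≠ 0)
    {P : Subgroup (GL (Fin 2) F)} (hP : IsPGroup 2 P) :
    Nat.card {x : GL (Fin 2) F |
      x ∈ P ∧ x ≠ 1 ∧ x ^ 2 = 1 ∧ x ∉ Subgroup.center (GL (Fin 2) F)} ≤ Nat.card F + 1 := by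
  set S := {x : GL (Fin 2) F | x ∈ P ∧ x ≠ 1 ∧ x ^ 2 = 1 ∧ x ∉ Subgroup.center (GL (Fin 2) F)}
  choose v hv0 hv using fun x : S ↦ exists_mulVec_eq_self_of_notMem_center x.2.2.2.1 x.2.2.2.2
  let fixedLine : S → ℙ F (Fin 2 → F) := fun x ↦ Projectivization.mk F (v x) (hv0 x)
  have hinj : Function.Injective fixedLine := by
    intro x y hxy
    obtain ⟨a, ha⟩ := (Projectivization.mk_eq_mk_iff' F _ _ (hv0 x) (hv0 y)).mp hxy
    have hyx : ((y : GL (Fin 2) F) : Matrix (Fin 2) (Fin 2) F) *ᵥ v x = v x := by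
      rw [← ha, mulVec_smul, hv y]
    refine Subtype.ext (eq_of_det_eq_of_mulVec_eq_self h2 hP x.2.1 y.2.1 ?_ (hv0 x) (hv x) hyx)
    rw [det_eq_neg_one_of_notMem_center h2 x.2.2.2.1 x.2.2.2.2,
      det_eq_neg_one_of_notMem_center h2 y.2.2.2.1 y.2.2.2.2]
  calc Nat.card S ≤ Nat.card (ℙ F (Fin 2 → F)) := Nat.card_le_card_of_injective fixedLine hinj
    _ = Nat.card F + 1 := Projectivization.card_of_finrank_two F _ (Module.finrank_fin_fun F)

theorem card_involutions_two_subgroup_GL2_general (q : ℕ) (F : Type*) [Field F] [Fintype F]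
    (hF : Fintype.card F = q) (hq4 : q % 4 = 3)
    (P : Subgroup (GL (Fin 2) F)) (hP : IsPGroup 2 P) :
    Nat.card {x : GL (Fin 2) F | x ∈ P ∧ x ≠ 1 ∧ x ^ 2 = 1} ≤ q + 2 ∧
      Nat.card {x : GL (Fin 2) F |
        x ∈ P ∧ x ≠ 1 ∧ x ^ 2 = 1 ∧ x ∉ Subgroup.center (GL (Fin 2) F)} ≤ q + 1 := by
  have h2 : (2 : F) ≠ 0 :=
    Ring.two_ne_zero (by rw [Ne, FiniteField.even_card_iff_char_two]; omega)
  have hnc := card_noncentral_involutions_le h2 hP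
  rw [Nat.card_eq_fintype_card (α := F), hF] at hnc
  exact ⟨(card_involutions_le_card_noncentral_add_one P).trans (by omega), hnc⟩

/-- Let `q = p^a` with `p` prime, `p ≥ 7`, `p ≡ 1 (mod 3)`, `q ≡ 3 (mod 4)`,
and let `F` be a finite field of cardinality `q`.  Then every `2`-subgroup `P` of `GL_2(F)`
contains at most `q + 2` involutions, of which at most `q + 1` are non-central in `GL_2(F)`. -/
theorem card_involutions_two_subgroup_GL2 (p a q : ℕ) (hp : p.Prime) (hp7 : 7 ≤ p)
    (hp3 : p % 3 = 1) (hq : q = p ^ a) (F : Type*) [Field F] [Fintype F]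
    (hF : Fintype.card F = q) (hq4 : q % 4 = 3)
    (P : Subgroup (GL (Fin 2) F)) (hP : IsPGroup 2 P) :
    Nat.card {x : GL (Fin 2) F | x ∈ P ∧ x ≠ 1 ∧ x ^ 2 = 1} ≤ q + 2 ∧
      Nat.card {x : GL (Fin 2) F |
        x ∈ P ∧ x ≠ 1 ∧ x ^ 2 = 1 ∧ x ∉ Subgroup.center (GL (Fin 2) F)} ≤ q + 1 :=
  card_involutions_two_subgroup_GL2_general q F hF hq4 P hP
end

section
/- Let u > 2 be an integer and let 𝒫 be a finite projective plane of order u². Let G be a collineation group of 𝒫 acting transitively on the points of 𝒫, and assume that every involution of G fixes exactly u² + u + 1 points of 𝒫. Let F be a nilpotent normal subgroup of G containing every nilpotent normal subgroup of G (the Fitting subgroup of G), and assume that F acts semiregularly on the points of 𝒫, i.e. no nontrivial element of F fixes a point. If G contains an involution, then either G contains no subgroup isomorphic to the Klein four-group (ℤ/2ℤ) × (ℤ/2ℤ), or every prime dividing |F| also divides u² + u + 1. -/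
/-!
Let `r` be a prime dividing `|F|` and let `R` be the Sylow `r`-subgroup of `F`: as `F` is
nilpotent, `R` is characteristic in `F`, hence normal in `G`. Let a Klein four-group `V ≤ G` act
on `R` by conjugation. If no involution of `V` centralised a nontrivial element of `R`, each
would induce a fixed-point-free involutory automorphism of `R`, i.e. inversion, and the product
of two of them would centralise `R`. So some involution `v` commutes with some `x ≠ 1` in `R`.
The `r`-group `⟨x⟩` then acts on the fixed points of `v`, without fixed points because `F` is
semiregular, so `r` divides their number `u² + u + 1`.
-/

open MulAction Subgroup

theorem IsKleinFour.of_mulEquiv {G₁ G₂ : Type*} [Group G₁] [Group G₂] [IsKleinFour G₂]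
    (e : G₁ ≃* G₂) : IsKleinFour G₁ where
  card_four := (Nat.card_congr e.toEquiv).trans IsKleinFour.card_four
  exponent_two := (Monoid.exponent_eq_of_mulEquiv e).trans IsKleinFour.exponent_two

instance : IsKleinFour (Multiplicative (ZMod 2) × Multiplicative (ZMod 2)) :=
  .of_mulEquiv (MulEquiv.prodMultiplicative (ZMod 2) (ZMod 2)).symm

theorem IsPGroup.dvd_card_of_isEmpty_fixedPoints {p : ℕ} [Fact p.Prime] {K X : Type*} [Group K]
    [MulAction K X] [Finite X] (hK : IsPGroup p K) (hfree : IsEmpty (fixedPoints K X)) :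
    p ∣ Nat.card X := by
  simpa [Nat.modEq_zero_iff_dvd] using hK.card_modEq_card_fixedPoints X

theorem MulAction.dvd_card_fixedBy_of_commute {G X : Type*} [Group G] [MulAction G X] [Finite X]
    {p : ℕ} [Fact p.Prime] {v x : G} (hx : IsPGroup p (zpowers x)) (hvx : Commute v x)
    (hfree : ∀ pt : X, x • pt ≠ pt) : p ∣ Nat.card (fixedBy X v) := by
  let S : SubMulAction (zpowers x) X :=
    { carrier := fixedBy X v
      smul_mem' := by
        rintro ⟨_, n, rfl⟩ pt (hpt : v • pt = pt)
        show v • x ^ n • pt = x ^ n • pt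
        rw [smul_smul, (hvx.zpow_right n).eq, mul_smul, hpt] }
  refine hx.dvd_card_of_isEmpty_fixedPoints (X := S) ⟨fun ⟨pt, hpt⟩ => ?_⟩
  exact hfree pt (congrArg Subtype.val (hpt ⟨x, mem_zpowers x⟩))

section Conjugation

variable {G : Type*} [Group G] {R : Subgroup G} [R.Normal] [Finite R]

theorem Subgroup.conj_eq_inv_of_forall_commute {a : G} (ha : a * a = 1)
    (hfree : ∀ x ∈ R, Commute a x → x = 1) {x : G} (hx : x ∈ R) : a * x * a⁻¹ = x⁻¹ := by
  have hφ : MonoidHom.FixedPointFree (MulAut.conjNormal (H := R) a) := fun y hy =>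
    Subtype.ext <| hfree y y.2
      (by simpa [mul_inv_eq_iff_eq_mul] using congrArg Subtype.val hy : a * y = y * a)
  have hinv : Function.Involutive (MulAut.conjNormal (H := R) a) := fun y => by
    rw [← MulAut.mul_apply, ← map_mul, ha, map_one, MulAut.one_apply]
  simpa using congrArg Subtype.val (congrFun (hφ.coe_eq_inv_of_involutive hinv) ⟨x, hx⟩)

theorem Subgroup.exists_ne_one_commute_of_isKleinFour [Nontrivial R] (H : Subgroup G)
    [IsKleinFour H] : ∃ v ∈ H, v ≠ 1 ∧ ∃ x ∈ R, x ≠ 1 ∧ Commute v x := by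
  by_contra! hfree
  have hinv : ∀ v ∈ H, v ≠ 1 → ∀ x ∈ R, v * x * v⁻¹ = x⁻¹ := fun v hvH hv1 x hx =>
    conj_eq_inv_of_forall_commute (congrArg Subtype.val (IsKleinFour.mul_self (⟨v, hvH⟩ : H)))
      (fun y hy hvy => by_contra fun hy1 => hfree v hvH hv1 y hy hy1 hvy) hx
  have : Nontrivial H := not_subsingleton_iff_nontrivial.mp fun _ =>
    IsKleinFour.not_isCyclic (G := H) isCyclic_of_subsingleton
  obtain ⟨a, ha1⟩ := exists_ne (1 : H)
  obtain ⟨b, hb⟩ : ∃ b : H, b ∉ zpowers a := by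
    by_contra! h
    exact IsKleinFour.not_isCyclic ⟨a, fun b => mem_zpowers_iff.mp (h b)⟩
  have hb1 : b ≠ 1 := fun h => hb (h ▸ one_mem _)
  have hab1 : ((a * b : H) : G) ≠ 1 := fun h =>
    hb ((mul_mem_cancel_left (mem_zpowers a)).mp (by simp [OneMemClass.coe_eq_one.mp h]))
  obtain ⟨x, hx1⟩ := exists_ne (1 : R)
  have hconj : ((a : G) * b) * x * ((a : G) * b)⁻¹ = x :=
    calc ((a : G) * b) * x * ((a : G) * b)⁻¹ = a * ((b : G) * x * (b : G)⁻¹) * (a : G)⁻¹ := by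
          group
      _ = ((a : G) * x * (a : G)⁻¹)⁻¹ := by
          rw [hinv b b.2 (by simpa using hb1) x x.2]; group
      _ = x := by rw [hinv a a.2 (by simpa using ha1) x x.2, inv_inv]
  exact hfree _ (a * b).2 hab1 x x.2 (by simpa using hx1) (mul_inv_eq_iff_eq_mul.mp hconj)

end Conjugation

theorem Subgroup.exists_normal_isPGroup_nontrivial_le {G : Type*} [Group G] {F : Subgroup G}
    [Finite F] [F.Normal] [Group.IsNilpotent F] {p : ℕ} [Fact p.Prime] (hp : p ∣ Nat.card F) :
    ∃ R : Subgroup G, R.Normal ∧ R ≤ F ∧ IsPGroup p R ∧ Nontrivial R := by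
  obtain ⟨P⟩ : Nonempty (Sylow p F) := inferInstance
  have := P.characteristic_of_normal inferInstance
  refine ⟨(P : Subgroup F).map F.subtype, inferInstance, map_subtype_le _, P.isPGroup'.map _, ?_⟩
  rw [nontrivial_iff_ne_bot, Ne, map_eq_bot_iff_of_injective _ F.subtype_injective]
  exact P.ne_bot_of_dvd_card hp

theorem klein_four_or_fitting_primes_dvd_general
    (Pt : Type*) [Finite Pt]
    (u : ℕ)
    (G : Type*) [Group G] [MulAction G Pt]
    (hfaithful : ∀ g : G, (∀ p : Pt, g • p = p) → g = 1)
    (hfix : ∀ g : G, g ≠ 1 → g ^ 2 = 1 →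
      Nat.card {pt : Pt // g • pt = pt} = u ^ 2 + u + 1)
    (F : Subgroup G) (hFnormal : F.Normal) (hFnilpotent : Group.IsNilpotent F)
    (hsemireg : ∀ g ∈ F, g ≠ 1 → ∀ pt : Pt, g • pt ≠ pt) :
    (¬ ∃ H : Subgroup G,
        Nonempty (H ≃* (Multiplicative (ZMod 2) × Multiplicative (ZMod 2)))) ∨
      ∀ r : ℕ, r.Prime → r ∣ Nat.card F → r ∣ u ^ 2 + u + 1 := by
  refine or_iff_not_imp_left.mpr fun hKlein r hr hrF => ?_
  obtain ⟨H, ⟨e⟩⟩ := not_not.mp hKlein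
  have : IsKleinFour H := .of_mulEquiv e
  have : Fact r.Prime := ⟨hr⟩
  have : FaithfulSMul G Pt := faithfulSMul_iff.mpr hfaithful
  have : Finite G := Finite.of_injective _ (toPerm_injective (α := G) (β := Pt))
  obtain ⟨R, hRnormal, hRF, hRp, hRnontrivial⟩ := exists_normal_isPGroup_nontrivial_le hrF
  obtain ⟨v, hvH, hv1, x, hxR, hx1, hvx⟩ := R.exists_ne_one_commute_of_isKleinFour H
  have hv2 : v ^ 2 = 1 := by
    simpa [sq] using congrArg Subtype.val (IsKleinFour.mul_self (⟨v, hvH⟩ : H))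
  rw [← hfix v hv1 hv2]
  exact dvd_card_fixedBy_of_commute (hRp.to_le (zpowers_le.mpr hxR)) hvx
    (hsemireg x (hRF hxR) hx1)

/-- **Lemma `threepossibilities`.** Let `𝒫` be a finite projective plane of
order `u²` (`u > 2`) and let `G` be a point-transitive collineation group whose involutions
each fix exactly `u² + u + 1` points.  Let `F` be the Fitting subgroup of `G` (a nilpotent
normal subgroup containing every nilpotent normal subgroup), and assume `F` acts
semiregularly on points.  If `G` contains an involution, then either `G` has no Klein
four-subgroup, or every prime divisor of `|F|` divides `u² + u + 1`. -/
theorem klein_four_or_fitting_primes_dvd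
    (Pt Ln : Type*) [Membership Pt Ln] [Finite Pt] [Finite Ln]
    [Configuration.ProjectivePlane Pt Ln]
    (u : ℕ) (hu : 2 < u) (horder : Configuration.ProjectivePlane.order Pt Ln = u ^ 2)
    (G : Type*) [Group G] [MulAction G Pt] [MulAction G Ln]
    (hinc : ∀ (g : G) (p : Pt) (l : Ln), p ∈ l ↔ g • p ∈ g • l)
    (hfaithful : ∀ g : G, (∀ p : Pt, g • p = p) → g = 1)
    (htrans : ∀ p q : Pt, ∃ g : G, g • p = q)
    (hfix : ∀ g : G, g ≠ 1 → g ^ 2 = 1 →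
      Nat.card {pt : Pt // g • pt = pt} = u ^ 2 + u + 1)
    (F : Subgroup G) (hFnormal : F.Normal) (hFnilpotent : Group.IsNilpotent F)
    (hFitting : ∀ K : Subgroup G, K.Normal → Group.IsNilpotent K → K ≤ F)
    (hsemireg : ∀ g ∈ F, g ≠ 1 → ∀ pt : Pt, g • pt ≠ pt)
    (hinv : ∃ g : G, g ≠ 1 ∧ g ^ 2 = 1) :
    (¬ ∃ H : Subgroup G,
        Nonempty (H ≃* (Multiplicative (ZMod 2) × Multiplicative (ZMod 2)))) ∨
      ∀ r : ℕ, r.Prime → r ∣ Nat.card F → r ∣ u ^ 2 + u + 1 :=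
  klein_four_or_fitting_primes_dvd_general Pt u G hfaithful hfix F hFnormal hFnilpotent hsemireg
end
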